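/- arXiv:1110.1126 — 3 statements merged into one kernel-verified Lean document; each statement's English description precedes it below -/
import Mathlib

section
/- The singular points of the Segre cubic X are exactly the S_6-orbit of (1:1:1:-1:-1:-1), and there are precisely 10 such points. -/
/-! The Jacobian has rank `< 2` exactly when the gradient `(3 xᵢ²)ᵢ` of the cubic is
proportional to the all-ones gradient of the hyperplane, i.e. when all `xᵢ²` agree, so that
`x = c • (±1, …, ±1)`. The linear equation then forces three signs of each kind (the cubic
equation holds automatically), and such sign vectors form one `S₆`-orbit. A sign vector and
its negative give the same projective point, so the singular points correspond to the
`3`-subsets of `Fin 6` containing `0`, of which there are `C(5, 2) = 10`. -/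

open scoped Pointwise

theorem Matrix.rank_lt_card_height_iff {K m n : Type*} [Field K] [Fintype m] [Fintype n]
    (A : Matrix m n K) : A.rank < Fintype.card m ↔ ¬ LinearIndependent K A.row := by
  rw [linearIndependent_iff_card_le_finrank_span, not_le, A.rank_eq_finrank_span_row,
    Set.finrank]

theorem Matrix.rank_of_one_row_lt_two_iff {K ι : Type*} [Field K] [Fintype ι] [Nonempty ι]
    (v : ι → K) :
    (Matrix.of ![fun _ => (1 : K), v]).rank < 2 ↔ ∃ a : K, (fun _ => a) = v := by
  have hone : (fun _ => (1 : K)) ≠ 0 :=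
    fun h => one_ne_zero (congrFun h (Classical.arbitrary ι))
  rw [← Fintype.card_fin 2, Matrix.rank_lt_card_height_iff]
  change ¬ LinearIndependent K ![_, v] ↔ _
  rw [LinearIndependent.pair_iff' hone]
  simp [funext_iff]

theorem Finset.exists_perm_smul_eq {ι : Type*} [DecidableEq ι] {S T : Finset ι}
    (h : S.card = T.card) : ∃ σ : Equiv.Perm ι, σ • S = T := by
  obtain ⟨σ, hσ⟩ := (Set.powersetCard.isPretransitive (α := ι) (n := T.card)).exists_smul_eq
    ⟨S, h⟩ ⟨T, rfl⟩
  exact ⟨σ, by simpa using congrArg Subtype.val hσ⟩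

namespace SegreCubic

section signVec

variable {K ι : Type*} [DecidableEq ι]

def signVec [One K] [Neg K] (S : Finset ι) : ι → K := fun i => if i ∈ S then 1 else -1

variable [Ring K]

theorem signVec_sq (S : Finset ι) (i : ι) : signVec S i ^ 2 = (1 : K) := by
  unfold signVec; split_ifs <;> simp

theorem signVec_pow_three (S : Finset ι) (i : ι) : signVec S i ^ 3 = (signVec S i : K) := by
  rw [pow_succ, signVec_sq, one_mul]

theorem signVec_ne_zero [Nontrivial K] [Nonempty ι] (S : Finset ι) :
    (signVec S : ι → K) ≠ 0 := fun h =>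
  (one_ne_zero : (1 : K) ≠ 0) (by rw [← signVec_sq S (Classical.arbitrary ι), h]; simp)

theorem signVec_compl [Fintype ι] (S : Finset ι) : (signVec Sᶜ : ι → K) = -signVec S := by
  funext i; by_cases hi : i ∈ S <;> simp [signVec, hi]

theorem signVec_injective [NeZero (2 : K)] :
    Function.Injective (signVec : Finset ι → ι → K) := by
  intro S T h
  have h1 : (1 : K) ≠ -1 := fun h => by
    have := congrArg (· + 1) h
    simp only [neg_add_cancel, one_add_one_eq_two] at this
    exact two_ne_zero this
  ext i
  have := congrFun h i
  by_cases hS : i ∈ S <;> by_cases hT : i ∈ T <;> simp_all [signVec, eq_comm]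

theorem sum_signVec [Fintype ι] (S : Finset ι) :
    ∑ i, (signVec S i : K) = S.card - Sᶜ.card := by
  simp [signVec, Finset.sum_ite, sub_eq_add_neg, Finset.filter_not,
    Finset.compl_eq_univ_sdiff]

theorem sum_signVec_eq_zero_iff [Fintype ι] [CharZero K] (S : Finset ι) :
    ∑ i, (signVec S i : K) = 0 ↔ 2 * S.card = Fintype.card ι := by
  rw [sum_signVec, sub_eq_zero, Nat.cast_inj, ← Finset.card_add_card_compl S]
  omega

theorem signVec_perm_smul (σ : Equiv.Perm ι) (S : Finset ι) (i : ι) :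
    (signVec (σ • S) (σ i) : K) = signVec S i := by
  simp only [signVec, ← Equiv.Perm.smul_def, Finset.smul_mem_smul_finset_iff]

theorem exists_perm_eq_smul_signVec_comp_iff (T : Finset ι) (c : K) (x : ι → K) :
    (∃ σ : Equiv.Perm ι, x = fun i => c * signVec T (σ i)) ↔
      ∃ S : Finset ι, S.card = T.card ∧ x = c • signVec S := by
  constructor
  · rintro ⟨σ, rfl⟩
    refine ⟨σ⁻¹ • T, Finset.card_smul_finset _ _, funext fun i => ?_⟩
    rw [Pi.smul_apply, smul_eq_mul, ← signVec_perm_smul σ (σ⁻¹ • T), smul_inv_smul]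
  · rintro ⟨S, hS, rfl⟩
    obtain ⟨σ, rfl⟩ := Finset.exists_perm_smul_eq hS
    exact ⟨σ, funext fun i => by rw [signVec_perm_smul, Pi.smul_apply, smul_eq_mul]⟩

end signVec

theorem eq_smul_signVec_of_sq_eq {K ι : Type*} [CommRing K] [NoZeroDivisors K] [DecidableEq K]
    [Fintype ι] [DecidableEq ι] {x : ι → K} {c : K}
    (h : ∀ i, x i ^ 2 = c ^ 2) : x = c • signVec (Finset.univ.filter fun i => x i = c) := by
  funext i
  rcases sq_eq_sq_iff_eq_or_eq_neg.1 (h i) with hi | hi <;> simp [signVec, hi]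

section singular

variable {K ι : Type*} [Field K] [CharZero K] [Fintype ι] [DecidableEq ι]

theorem exists_eq_smul_signVec_of_rank_lt_two {x : ι → K} (hx : x ≠ 0) (hsum : ∑ i, x i = 0)
    (hrank : (Matrix.of ![fun _ => (1 : K), fun i => 3 * x i ^ 2]).rank < 2) :
    ∃ c : K, c ≠ 0 ∧ ∃ S : Finset ι, 2 * S.card = Fintype.card ι ∧ x = c • signVec S := by
  classical
  obtain ⟨i₀, hi₀⟩ := Function.ne_iff.1 hx
  have : Nonempty ι := ⟨i₀⟩
  obtain ⟨a, ha⟩ := (Matrix.rank_of_one_row_lt_two_iff _).1 hrank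
  have hsq : ∀ i, x i ^ 2 = x i₀ ^ 2 := fun i => by
    simpa using (congrFun ha i).symm.trans (congrFun ha i₀)
  have hx_eq := eq_smul_signVec_of_sq_eq hsq
  refine ⟨x i₀, hi₀, _, (sum_signVec_eq_zero_iff (K := K) _).1 ?_, hx_eq⟩
  rw [hx_eq] at hsum
  simp only [Pi.smul_apply, smul_eq_mul, ← Finset.mul_sum] at hsum
  exact (mul_eq_zero.1 hsum).resolve_left hi₀

theorem singular_of_eq_smul_signVec [Nonempty ι] {c : K} (hc : c ≠ 0) {S : Finset ι}
    (hS : 2 * S.card = Fintype.card ι) {x : ι → K} (hx : x = c • signVec S) :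
    x ≠ 0 ∧ ∑ i, x i = 0 ∧ ∑ i, x i ^ 3 = 0 ∧
      (Matrix.of ![fun _ => (1 : K), fun i => 3 * x i ^ 2]).rank < 2 := by
  subst hx
  have hsum : ∑ i, (signVec S i : K) = 0 := (sum_signVec_eq_zero_iff S).2 hS
  refine ⟨smul_ne_zero hc (signVec_ne_zero S), ?_, ?_, ?_⟩
  · simp [← Finset.mul_sum, hsum]
  · simp [mul_pow, signVec_pow_three, ← Finset.mul_sum, hsum]
  · refine (Matrix.rank_of_one_row_lt_two_iff _).2 ⟨3 * c ^ 2, funext fun i => ?_⟩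
    simp [mul_pow, signVec_sq]

end singular

section signPoint

variable {K ι : Type*} [DivisionRing K] [DecidableEq ι] [Nonempty ι]

variable (K) in
def signPoint (S : Finset ι) : Projectivization K (ι → K) :=
  Projectivization.mk K (signVec S) (signVec_ne_zero S)

theorem signPoint_compl [Fintype ι] (S : Finset ι) : signPoint K Sᶜ = signPoint K S :=
  (Projectivization.mk_eq_mk_iff' K _ _ _ _).2 ⟨-1, by rw [signVec_compl, neg_one_smul]⟩

theorem signPoint_injOn_mem [NeZero (2 : K)] (a : ι) :
    Set.InjOn (signPoint K) {S : Finset ι | a ∈ S} := by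
  intro S (hS : a ∈ S) T (hT : a ∈ T) h
  obtain ⟨t, ht⟩ := (Projectivization.mk_eq_mk_iff' K _ _ _ _).1 h
  have ht1 : t = 1 := by simpa [signVec, hS, hT] using congrFun ht a
  rw [ht1, one_smul] at ht
  exact signVec_injective ht.symm

theorem image_signPoint_card_eq [Fintype ι] {k : ℕ} (hk : 2 * k = Fintype.card ι) (a : ι) :
    signPoint K '' {S : Finset ι | S.card = k} = signPoint K '' {S | S.card = k ∧ a ∈ S} := by
  refine (Set.image_mono fun S hS => hS.1).antisymm' ?_
  rintro _ ⟨S, hS, rfl⟩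
  by_cases ha : a ∈ S
  · exact ⟨S, ⟨hS, ha⟩, rfl⟩
  · refine ⟨Sᶜ, ⟨?_, Finset.mem_compl.2 ha⟩, signPoint_compl S⟩
    rw [Finset.card_compl, show S.card = k from hS]
    omega

theorem ncard_image_signPoint_card_eq [Fintype ι] [NeZero (2 : K)] {k : ℕ}
    (hk : 2 * k = Fintype.card ι) (a : ι) : (signPoint K '' {S : Finset ι | S.card = k}).ncard =
      {S : Finset ι | S.card = k ∧ a ∈ S}.ncard := by
  rw [image_signPoint_card_eq hk a,
    ((signPoint_injOn_mem a).mono fun S hS => hS.2).ncard_image]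

theorem setOf_mk_perm_signVec_eq_image (T : Finset ι) :
    {q : Projectivization K (ι → K) | ∃ (x : ι → K) (hx : x ≠ 0),
        q = Projectivization.mk K x hx ∧ ∃ σ : Equiv.Perm ι, x = fun i => signVec T (σ i)} =
      signPoint K '' {S : Finset ι | S.card = T.card} := by
  ext q
  constructor
  · rintro ⟨x, hx, rfl, hσ⟩
    obtain ⟨S, hS, rfl⟩ := (exists_perm_eq_smul_signVec_comp_iff T 1 x).1 (by simpa using hσ)
    exact ⟨S, hS, (Projectivization.mk_eq_mk_iff' K _ _ _ _).2 ⟨1, by simp⟩⟩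
  · rintro ⟨S, hS, rfl⟩
    refine ⟨signVec S, signVec_ne_zero S, rfl, ?_⟩
    simpa using
      (exists_perm_eq_smul_signVec_comp_iff T (1 : K) _).2 ⟨S, hS, (one_smul _ _).symm⟩

end signPoint

theorem ncard_card_eq_three_zero_mem :
    {S : Finset (Fin 6) | S.card = 3 ∧ 0 ∈ S}.ncard = 10 := by
  simp only [Set.ncard_eq_toFinset_card', Set.toFinset_ofPred]
  decide

end SegreCubic

open SegreCubic in
/-- The singular points of the Segre cubic (points of `P^5` satisfying
`∑ xᵢ = 0`, `∑ xᵢ³ = 0`, where the Jacobian of the two defining forms has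
rank `< 2`) are exactly the `S₆`-orbit of `(1:1:1:-1:-1:-1)`, and there are
precisely `10` such points in projective space. -/
theorem segre_cubic_singular_locus :
    let p : Fin 6 → ℂ := ![1, 1, 1, -1, -1, -1]
    ({x : Fin 6 → ℂ | x ≠ 0 ∧ ∑ i, x i = 0 ∧ ∑ i, x i ^ 3 = 0 ∧
        (Matrix.of ![fun _ => (1 : ℂ), fun i => 3 * x i ^ 2] :
          Matrix (Fin 2) (Fin 6) ℂ).rank < 2}
      = {x : Fin 6 → ℂ | ∃ (σ : Equiv.Perm (Fin 6)) (c : ℂ), c ≠ 0 ∧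
          x = fun i => c * p (σ i)}) ∧
    Set.ncard {q : Projectivization ℂ (Fin 6 → ℂ) |
        ∃ (x : Fin 6 → ℂ) (hx : x ≠ 0), q = Projectivization.mk ℂ x hx ∧
          ∃ σ : Equiv.Perm (Fin 6), x = fun i => p (σ i)} = 10 := by
  intro p
  have hp : p = signVec {0, 1, 2} := by funext i; fin_cases i <;> rfl
  have hT : ({0, 1, 2} : Finset (Fin 6)).card = 3 := rfl
  rw [hp]
  constructor
  · ext x
    constructor
    · rintro ⟨hx, hsum, -, hrank⟩
      obtain ⟨c, hc, S, hS, rfl⟩ := exists_eq_smul_signVec_of_rank_lt_two hx hsum hrank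
      obtain ⟨σ, hσ⟩ := (exists_perm_eq_smul_signVec_comp_iff {0, 1, 2} c _).2
        ⟨S, by simp only [Fintype.card_fin] at hS; omega, rfl⟩
      exact ⟨σ, c, hc, hσ⟩
    · rintro ⟨σ, c, hc, hσ⟩
      obtain ⟨S, hS, rfl⟩ := (exists_perm_eq_smul_signVec_comp_iff _ c x).1 ⟨σ, hσ⟩
      exact singular_of_eq_smul_signVec hc (by simp [hS]) rfl
  · rw [setOf_mk_perm_signVec_eq_image, hT, ncard_image_signPoint_card_eq rfl 0,
      ncard_card_eq_three_zero_mem]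
end

section
/- The hyperplane section of the Segre cubic X given by x_1 + x_2 = 0 is the union of the three projective planes defined by {x_1+x_2=0, x_3+x_4=0, x_5+x_6=0}, {x_1+x_2=0, x_3+x_5=0, x_4+x_6=0}, and {x_1+x_2=0, x_3+x_6=0, x_4+x_5=0}. -/
/-- The hyperplane section `x₁ + x₂ = 0` of the Segre cubic
(`∑ xᵢ = 0`, `∑ xᵢ³ = 0` in `P^5`) is, set-theoretically, the union of the
three projective planes `{x₁+x₂=0, x₃+x₄=0, x₅+x₆=0}`,
`{x₁+x₂=0, x₃+x₅=0, x₄+x₆=0}` and `{x₁+x₂=0, x₃+x₆=0, x₄+x₅=0}`. -/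
theorem segre_cubic_hyperplane_section_three_planes (x : Fin 6 → ℂ) :
    ((∑ i, x i = 0) ∧ (∑ i, x i ^ 3 = 0) ∧ x 0 + x 1 = 0) ↔
      ((x 0 + x 1 = 0 ∧ x 2 + x 3 = 0 ∧ x 4 + x 5 = 0) ∨
       (x 0 + x 1 = 0 ∧ x 2 + x 4 = 0 ∧ x 3 + x 5 = 0) ∨
       (x 0 + x 1 = 0 ∧ x 2 + x 5 = 0 ∧ x 3 + x 4 = 0)) := by
  simp only [Fin.sum_univ_six]
  constructor
  · rintro ⟨h1, h2, h3⟩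
    have h4 : x 2 + x 3 + x 4 + x 5 = 0 := by linear_combination h1 - h3
    have key : (x 2 + x 3) * ((x 2 + x 4) * (x 2 + x 5)) = 0 := by
      linear_combination h2 / 3 - (x 0 ^ 2 - x 0 * x 1 + x 1 ^ 2) / 3 * h3 +
        (2 * x 2 ^ 2 + x 2 * (x 3 + x 4 + x 5) + x 3 * x 4 + x 3 * x 5 + x 4 * x 5
          - x 3 ^ 2 - x 4 ^ 2 - x 5 ^ 2) / 3 * h4
    rcases mul_eq_zero.1 key with h | h
    · exact Or.inl ⟨h3, h, by linear_combination h4 - h⟩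
    rcases mul_eq_zero.1 h with h | h
    · exact Or.inr (Or.inl ⟨h3, h, by linear_combination h4 - h⟩)
    · exact Or.inr (Or.inr ⟨h3, h, by linear_combination h4 - h⟩)
  · rintro (⟨a, b, c⟩ | ⟨a, b, c⟩ | ⟨a, b, c⟩)
    · exact ⟨by linear_combination a + b + c, by linear_combination (x 0 ^ 2 - x 0 * x 1 + x 1 ^ 2) * a +
        (x 2 ^ 2 - x 2 * x 3 + x 3 ^ 2) * b + (x 4 ^ 2 - x 4 * x 5 + x 5 ^ 2) * c, a⟩
    · exact ⟨by linear_combination a + b + c, by linear_combination (x 0 ^ 2 - x 0 * x 1 + x 1 ^ 2) * a +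
        (x 2 ^ 2 - x 2 * x 4 + x 4 ^ 2) * b + (x 3 ^ 2 - x 3 * x 5 + x 5 ^ 2) * c, a⟩
    · exact ⟨by linear_combination a + b + c, by linear_combination (x 0 ^ 2 - x 0 * x 1 + x 1 ^ 2) * a +
        (x 2 ^ 2 - x 2 * x 5 + x 5 ^ 2) * b + (x 3 ^ 2 - x 3 * x 4 + x 4 ^ 2) * c, a⟩
end

section
/- In the group ring C[A_L] with A_L = (F_3)^4 and quadratic form q_L as above, define the Weil representation \rho of SL(2,Z) by \rho(T)e_\alpha = e^{\pi i q_L(\alpha)} e_\alpha and \rho(S)e_\alpha = (-1/9)\sum_{\delta \in A_L} e^{-\pi i b(\delta,\alpha)} e_\delta, where b is the associated bilinear form. Then \rho factors through SL(2, Z/3Z), and the trace of \rho(S) equals 1. -/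
/-!
Writing `ω = e^{2πi/3}`, the summand is `ω^{-v₀²} ω^{v₁²} ω^{v₂²} ω^{v₃²}` with `vᵢ` the lift of
`αᵢ`, so the sum over `(F₃)⁴` factors into the one-variable Gauss sums `1 + 2ω⁻¹` and `(1 + 2ω)³`.
Since `1 + ω + ω² = 0`, we have `(1 + 2ω)² = -3` and `(1 + 2ω⁻¹)(1 + 2ω) = 3`, so the sum is `-9`.
-/

/-- The bilinear form `b(x,y) = (2/3)(x₁y₁ - x₂y₂ - x₃y₃ - x₄y₄)` on
`A_L = (F₃)⁴`, with coordinates lifted to `{-1,0,1} ⊂ ℤ`, taking values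
in `ℚ` (regarded mod `2ℤ`). -/
noncomputable def bForm (x y : Fin 4 → ZMod 3) : ℚ :=
  (2 / 3) * (((x 0).valMinAbs : ℚ) * ((y 0).valMinAbs : ℚ) -
    ((x 1).valMinAbs : ℚ) * ((y 1).valMinAbs : ℚ) -
    ((x 2).valMinAbs : ℚ) * ((y 2).valMinAbs : ℚ) -
    ((x 3).valMinAbs : ℚ) * ((y 3).valMinAbs : ℚ))

open Complex Real

theorem ZMod.sum_zpow_valMinAbs_sq_three {K : Type*} [DivisionRing K] (ζ : K) :
    ∑ x : ZMod 3, ζ ^ (x.valMinAbs ^ 2) = 1 + 2 * ζ := by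
  have h1 : (1 : ZMod 3).valMinAbs = 1 := by decide
  have h2 : (2 : ZMod 3).valMinAbs = -1 := by decide
  rw [show (Finset.univ : Finset (ZMod 3)) = {0, 1, 2} by decide,
    Finset.sum_insert (by decide), Finset.sum_pair (by decide), h1, h2]
  norm_num [two_mul]

theorem ZMod.sum_pi_prod_zpow_valMinAbs_sq_three {ι K : Type*} [Fintype ι] [DecidableEq ι]
    [Field K] (ζ : ι → K) :
    ∑ α : ι → ZMod 3, ∏ i, ζ i ^ ((α i).valMinAbs ^ 2) = ∏ i, (1 + 2 * ζ i) := by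
  simp_rw [← ZMod.sum_zpow_valMinAbs_sq_three, Fintype.prod_sum]

theorem IsPrimitiveRoot.one_add_two_mul_inv_mul_one_add_two_mul_pow_three {K : Type*} [Field K]
    {ω : K} (hω : IsPrimitiveRoot ω 3) :
    (1 + 2 * ω⁻¹) * (1 + 2 * ω) ^ 3 = -9 := by
  have hcube : ω ^ 3 = 1 := hω.pow_eq_one
  have hsum : 1 + ω + ω ^ 2 = 0 := by
    simpa [Finset.sum_range_succ] using hω.geom_sum_eq_zero (by norm_num)
  have hinv : ω⁻¹ = ω ^ 2 := inv_eq_of_mul_eq_one_right (by linear_combination hcube)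
  have hnorm : (1 + 2 * ω ^ 2) * (1 + 2 * ω) = 3 := by linear_combination 2 * hsum + 4 * hcube
  have hsq : (1 + 2 * ω) ^ 2 = -3 := by linear_combination 4 * hsum
  calc (1 + 2 * ω⁻¹) * (1 + 2 * ω) ^ 3 = (1 + 2 * ω ^ 2) * (1 + 2 * ω) * (1 + 2 * ω) ^ 2 := by
        rw [hinv]; ring
    _ = -9 := by rw [hnorm, hsq]; norm_num

theorem exp_neg_pi_I_mul_bForm_self (α : Fin 4 → ZMod 3) :
    exp (-π * I * (bForm α α : ℂ)) =
      ∏ i, ![(exp (2 * π * I / 3))⁻¹, exp (2 * π * I / 3), exp (2 * π * I / 3),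
        exp (2 * π * I / 3)] i ^ ((α i).valMinAbs ^ 2) := by
  rw [Fin.prod_univ_four]
  simp only [Matrix.cons_val]
  rw [← Complex.exp_neg, ← exp_int_mul, ← exp_int_mul, ← exp_int_mul, ← exp_int_mul,
    ← Complex.exp_add, ← Complex.exp_add, ← Complex.exp_add]
  congr 1
  push_cast [bForm]
  ring

/-- The trace of `ρ(S)` in the Weil representation of `SL(2,ℤ)` on
`ℂ[A_L]`, where `ρ(S)e_α = (-1/9)∑_δ e^{-πi b(δ,α)} e_δ`, equals `1`:
concretely, `(-1/9)∑_{α ∈ A_L} e^{-πi b(α,α)} = 1`. -/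
theorem weil_representation_trace_S :
    (-1 / 9 : ℂ) * ∑ α : Fin 4 → ZMod 3,
      Complex.exp (-(Real.pi : ℂ) * Complex.I * ((bForm α α : ℚ) : ℂ)) = 1 := by
  have hω : IsPrimitiveRoot (exp (2 * π * I / 3)) 3 := by
    exact_mod_cast Complex.isPrimitiveRoot_exp 3 (by norm_num)
  simp_rw [exp_neg_pi_I_mul_bForm_self, ZMod.sum_pi_prod_zpow_valMinAbs_sq_three,
    Fin.prod_univ_four, Matrix.cons_val]
  linear_combination (-1 / 9 : ℂ) * hω.one_add_two_mul_inv_mul_one_add_two_mul_pow_three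
end
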